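/- arXiv:2009.14121 — 6 statements merged into one kernel-verified Lean document; each statement's English description precedes it below -/
import Mathlib

section
/- Let F : ℕ → ℂ be multiplicative and not identically zero, and let G_F be its canonical Ramanujan coefficient. Then: G_F is multiplicative; for every a ∈ ℕ the Ramanujan series R_{G_F}(a) converges with R_{G_F}(a) = Σ_{d ∣ a·rad(a)} G_F(d)·c_d(a) = F(a); for every a ∈ ℕ the coprime series S_{G_F}(a) converges with S_{G_F}(a) = 1. Moreover G_F is the unique such function: if G : ℕ → ℂ is multiplicative, R_G(a) converges with R_G(a) = F(a) for all a ∈ ℕ, and S_G(a) converges with S_G(a) = 1 for all a ∈ ℕ, then G = G_F. -/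
open Filter Finset

noncomputable def mu (n : ℕ) : ℂ := ((ArithmeticFunction.moebius n : ℤ) : ℂ)

/-- Ramanujan sum `c_q(a) = ∑_{d ∣ gcd(q,a)} d · μ(q/d)` (Kluyver's formula). -/
noncomputable def cR (q a : ℕ) : ℂ :=
  ∑ d ∈ (Nat.gcd q a).divisors, (d : ℂ) * mu (q / d)

/-- Partial sum of the Ramanujan series `R_G(a,x) = ∑_{q ≤ x} G(q) c_q(a)`. -/
noncomputable def RS (G : ℕ → ℂ) (a : ℕ) (x : ℝ) : ℂ :=
  ∑ q ∈ Finset.Icc 1 ⌊x⌋₊, G q * cR q a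

/-- Partial sum of the coprime series `S_G(a,x) = ∑_{r ≤ x, (r,a)=1} G(r) μ(r)`. -/
noncomputable def SS (G : ℕ → ℂ) (a : ℕ) (x : ℝ) : ℂ :=
  ∑ r ∈ (Finset.Icc 1 ⌊x⌋₊).filter fun r => Nat.gcd r a = 1, G r * mu r

/-- Partial sum of the Lucht series `L_G(d,x) = ∑_{K ≤ x} μ(K) G(dK)`. -/
noncomputable def LS (G : ℕ → ℂ) (d : ℕ) (x : ℝ) : ℂ :=
  ∑ K ∈ Finset.Icc 1 ⌊x⌋₊, mu K * G (d * K)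

def RTendsto (G : ℕ → ℂ) (a : ℕ) (L : ℂ) : Prop :=
  Tendsto (fun x : ℝ => RS G a x) atTop (nhds L)

def RConv (G : ℕ → ℂ) (a : ℕ) : Prop := ∃ L, RTendsto G a L

def STendsto (G : ℕ → ℂ) (a : ℕ) (L : ℂ) : Prop :=
  Tendsto (fun x : ℝ => SS G a x) atTop (nhds L)

def SConv (G : ℕ → ℂ) (a : ℕ) : Prop := ∃ L, STendsto G a L

def LTendsto (G : ℕ → ℂ) (d : ℕ) (L : ℂ) : Prop :=
  Tendsto (fun x : ℝ => LS G d x) atTop (nhds L)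

def LConv (G : ℕ → ℂ) (d : ℕ) : Prop := ∃ L, LTendsto G d L

/-- `G` is multiplicative: `G(ab) = G(a)G(b)` for coprime positive `a, b`. -/
def IsMult (G : ℕ → ℂ) : Prop :=
  ∀ a b : ℕ, 0 < a → 0 < b → Nat.Coprime a b → G (a * b) = G a * G b

/-- `G` is completely multiplicative. -/
def IsCM (G : ℕ → ℂ) : Prop :=
  ∀ a b : ℕ, 0 < a → 0 < b → G (a * b) = G a * G b

/-- The completely multiplicative index `w_{p,G}`: the largest `w ∈ ℕ` with
`G(p^k) = G(p)^k` for all `1 ≤ k ≤ w`, and `⊤` if this holds for all `k`. -/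
noncomputable def cmIndex (G : ℕ → ℂ) (p : ℕ) : ℕ∞ :=
  ⨆ w ∈ {n : ℕ | ∀ k : ℕ, 1 ≤ k → k ≤ n → G (p ^ k) = G p ^ k}, (w : ℕ∞)

/-- The transparency index `v_{p,G}`: least `K ≥ 0` with `G(p^{K+1}) ≠ 1`, or `⊤`. -/
noncomputable def trIdx (G : ℕ → ℂ) (p : ℕ) : ℕ∞ :=
  ⨅ K ∈ {K : ℕ | G (p ^ (K + 1)) ≠ 1}, (K : ℕ∞)

/-- A prime `p` is bad for `G` iff `1 ≤ |G(p)| ≤ p`. -/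
def IsBad (G : ℕ → ℂ) (p : ℕ) : Prop :=
  1 ≤ ‖G p‖ ∧ ‖G p‖ ≤ p

def IsHyperbad (G : ℕ → ℂ) (p : ℕ) : Prop :=
  p.Prime ∧ IsBad G p ∧ cmIndex G p = ⊤

def IsSimplyBad (G : ℕ → ℂ) (p : ℕ) : Prop :=
  p.Prime ∧ IsBad G p ∧ cmIndex G p ≠ ⊤

def IsSimplyTransparent (G : ℕ → ℂ) (p : ℕ) : Prop :=
  p.Prime ∧ G p = 1 ∧ cmIndex G p ≠ ⊤

/-- The Ramanujan conductor `N(G) = ∏_{p simply bad} p^{w_{p,G}}`. -/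
noncomputable def ramCond (G : ℕ → ℂ) : ℕ :=
  ∏ᶠ p ∈ {p : ℕ | IsSimplyBad G p}, p ^ (cmIndex G p).toNat

/-- The transparency conductor `N_T(G) = ∏_{p simply transparent} p^{v_{p,G}}`. -/
noncomputable def transpCond (G : ℕ → ℂ) : ℕ :=
  ∏ᶠ p ∈ {p : ℕ | IsSimplyTransparent G p}, p ^ (trIdx G p).toNat

/-- The squarefree radical of `n`. -/
def rad (n : ℕ) : ℕ := ∏ p ∈ n.primeFactors, p

/-- Euler–Ramanujan factor `E_G(a) = ∑_{d ∣ a·rad a} G(d) c_d(a)`. -/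
noncomputable def EG (G : ℕ → ℂ) (a : ℕ) : ℂ := ∑ d ∈ (a * rad a).divisors, G d * cR d a

/-- `C_G(a) = ∑_{d ∣ a} G(d) μ(d)`. -/
noncomputable def CGsum (G : ℕ → ℂ) (a : ℕ) : ℂ := ∑ d ∈ a.divisors, G d * mu d

/-- `D_G(a) = ∑_{d ∣ a} G(d) d`. -/
noncomputable def DGsum (G : ℕ → ℂ) (a : ℕ) : ℂ := ∑ d ∈ a.divisors, G d * (d : ℂ)

/-- `U_G(a) = ∑_{d ∣ a} μ(d) G(da)`. -/
noncomputable def UGsum (G : ℕ → ℂ) (a : ℕ) : ℂ := ∑ d ∈ a.divisors, mu d * G (d * a)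

/-- Eratosthenes transform `F' = F ∗ μ`. -/
noncomputable def eratos (F : ℕ → ℂ) (n : ℕ) : ℂ := ∑ d ∈ n.divisors, F d * mu (n / d)

/-- The canonical Ramanujan coefficient of `F`:
`G_F(q) = ∏_{p ∣ q} (1 - ∑_{K=0}^{v_p(q)-1} F'(p^K)/p^K)`. -/
noncomputable def canonCoeff (F : ℕ → ℂ) (q : ℕ) : ℂ :=
  ∏ p ∈ q.primeFactors,
    (1 - ∑ K ∈ Finset.range (q.factorization p), eratos F (p ^ K) / ((p : ℂ) ^ K))

/-- The opacity core `H_G(q) = G(q·N_T(G))·μ(q)²`. -/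
noncomputable def opacityCore (G : ℕ → ℂ) (q : ℕ) : ℂ :=
  G (q * transpCond G) * mu q ^ 2

/-!
Since `F(1) = 1`, the factor of `G_F` at a prime dividing `q` exactly once is `1 - F'(1) = 0`.
Hence the coprime series of `G_F` reduces to its term at `1`, and `G_F(q) c_q(a)` vanishes
unless `q ∣ a rad(a)`, so the Ramanujan series of `G_F` is a finite sum.

For any multiplicative `G` whose coprime series all converge to `1`, Kluyver's formula for
`c_q(a)` and the splitting of each squarefree `K` as `t r` with `t ∣ m`, `(r, m) = 1`, give
`R_G(a) = ∑_{d ∣ a} d U_G(d)`, where `U_G(d) = ∑_{t ∣ d} μ(t) G(td)` is multiplicative with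
`U_G(p^v) = G(p^v) - G(p^{v+1})` for `v ≥ 1`. By Möbius inversion `R_G = F` amounts to
`d U_G(d) = F'(d)`; together with `G(p) = 0` (read off the coprime series at `p`) this is the
recursion `G(p^{v+1}) = G(p^v) - F'(p^v)/p^v` that defines `G_F`.
-/

lemma mu_one : mu 1 = 1 := by simp [mu]

lemma mu_eq_zero_of_not_squarefree {n : ℕ} (h : ¬ Squarefree n) : mu n = 0 := by
  simp [mu, ArithmeticFunction.moebius_eq_zero_of_not_squarefree h]

lemma mu_mul {m n : ℕ} (h : m.Coprime n) : mu (m * n) = mu m * mu n := by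
  simp [mu, ArithmeticFunction.isMultiplicative_moebius.map_mul_of_coprime h]

lemma mu_prime_pow {p k : ℕ} (hp : p.Prime) (hk : k ≠ 0) :
    mu (p ^ k) = if k = 1 then -1 else 0 := by
  simp only [mu, ArithmeticFunction.moebius_apply_prime_pow hp hk]
  split_ifs <;> simp

lemma mu_prime {p : ℕ} (hp : p.Prime) : mu p = -1 := by
  simpa using mu_prime_pow hp one_ne_zero

namespace IsMult

variable {G H : ℕ → ℂ}

lemma map_one (hG : IsMult G) (h : ∃ a, 0 < a ∧ G a ≠ 0) : G 1 = 1 := by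
  obtain ⟨a, ha, hGa⟩ := h
  have := hG a 1 ha one_pos (Nat.coprime_one_right a)
  rw [mul_one] at this
  exact (mul_eq_left₀ hGa).1 this.symm

lemma mul (hG : IsMult G) (hH : IsMult H) : IsMult fun n => G n * H n := by
  intro a b ha hb hab
  simp only [hG a b ha hb hab, hH a b ha hb hab]
  ring

lemma eq_of_eq_on_prime_pow (hG : IsMult G) (hH : IsMult H) (h1 : G 1 = H 1)
    (hpow : ∀ p k, p.Prime → 0 < k → G (p ^ k) = H (p ^ k)) : ∀ n, 0 < n → G n = H n := by
  intro n
  induction n using Nat.recOnPosPrimePosCoprime with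
  | prime_pow p k hp hk => exact fun _ => hpow p k hp hk
  | zero => exact fun h => absurd h (lt_irrefl 0)
  | one => exact fun _ => h1
  | coprime a b ha hb hab iha ihb =>
    intro _
    rw [hG a b (by omega) (by omega) hab, hH a b (by omega) (by omega) hab,
      iha (by omega), ihb (by omega)]

end IsMult

lemma isMult_natCast : IsMult fun n => (n : ℂ) := by
  intro a b _ _ _
  push_cast
  rfl

lemma isMult_sum_divisors {h : ℕ → ℕ → ℂ}
    (hh : ∀ a b d e, 0 < a → 0 < b → a.Coprime b → d ∣ a → e ∣ b →
      h (d * e) (a * b) = h d a * h e b) :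
    IsMult fun n => ∑ d ∈ n.divisors, h d n := by
  intro a b ha hb hab
  dsimp only
  rw [Nat.divisors_mul, ← image_mul_product,
    sum_image (Nat.Coprime.mul_injOn_divisors hab), sum_product, sum_mul_sum]
  refine sum_congr rfl fun d hd => sum_congr rfl fun e he => ?_
  exact hh a b d e ha hb hab (Nat.dvd_of_mem_divisors hd) (Nat.dvd_of_mem_divisors he)

lemma isMult_eratos {F : ℕ → ℂ} (hF : IsMult F) : IsMult (eratos F) := by
  refine isMult_sum_divisors fun a b d e ha hb hab hd he => ?_
  rw [← Nat.div_mul_div_comm hd he, mu_mul (Nat.Coprime.coprime_div_left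
    (Nat.Coprime.coprime_div_right hab he) hd),
    hF d e (Nat.pos_of_dvd_of_pos hd ha) (Nat.pos_of_dvd_of_pos he hb)
      (Nat.Coprime.of_dvd hd he hab)]
  ring

lemma isMult_UGsum {G : ℕ → ℂ} (hG : IsMult G) : IsMult (UGsum G) := by
  refine isMult_sum_divisors fun a b d e ha hb hab hd he => ?_
  have hda : 0 < d * a := Nat.mul_pos (Nat.pos_of_dvd_of_pos hd ha) ha
  have heb : 0 < e * b := Nat.mul_pos (Nat.pos_of_dvd_of_pos he hb) hb
  have hcop : (d * a).Coprime (e * b) :=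
    Nat.Coprime.mul_left (Nat.Coprime.mul_right (hab.coprime_dvd_left hd |>.coprime_dvd_right he)
      (hab.coprime_dvd_left hd)) (Nat.Coprime.mul_right (hab.coprime_dvd_right he) hab)
  rw [mu_mul (Nat.Coprime.of_dvd hd he hab), show d * e * (a * b) = d * a * (e * b) by ring,
    hG _ _ hda heb hcop]
  ring

section Eratosthenes

variable {F : ℕ → ℂ}

lemma eratos_one : eratos F 1 = F 1 := by simp [eratos, mu_one]

lemma sum_divisors_eq_iff_eratos_eq {f : ℕ → ℂ} :
    (∀ n, 0 < n → ∑ d ∈ n.divisors, f d = F n) ↔ ∀ n, 0 < n → eratos F n = f n := by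
  rw [ArithmeticFunction.sum_eq_iff_sum_mul_moebius_eq]
  refine forall₂_congr fun n _ => ?_
  rw [Nat.sum_divisorsAntidiagonal' (fun i j => (ArithmeticFunction.moebius i : ℂ) * F j), eratos]
  simp only [mu, mul_comm]

end Eratosthenes

section CanonCoeff

variable {F : ℕ → ℂ}

lemma canonCoeff_eq_factorization_prod (q : ℕ) :
    canonCoeff F q = q.factorization.prod fun p k =>
      1 - ∑ K ∈ range k, eratos F (p ^ K) / (p : ℂ) ^ K := by
  rw [canonCoeff, Finsupp.prod, Nat.support_factorization]

lemma isMult_canonCoeff (F : ℕ → ℂ) : IsMult (canonCoeff F) := by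
  intro a b ha hb hab
  simp only [canonCoeff_eq_factorization_prod, Nat.factorization_mul_of_coprime hab]
  rw [Finsupp.prod_add_index_of_disjoint]
  simpa only [Nat.support_factorization] using hab.disjoint_primeFactors

lemma canonCoeff_prime_pow {p : ℕ} (hp : p.Prime) (v : ℕ) :
    canonCoeff F (p ^ v) = 1 - ∑ K ∈ range v, eratos F (p ^ K) / (p : ℂ) ^ K := by
  rw [canonCoeff_eq_factorization_prod, hp.factorization_pow, Finsupp.prod_single_index]
  simp

lemma canonCoeff_prime_pow_succ {p : ℕ} (hp : p.Prime) (v : ℕ) :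
    canonCoeff F (p ^ (v + 1)) = canonCoeff F (p ^ v) - eratos F (p ^ v) / (p : ℂ) ^ v := by
  rw [canonCoeff_prime_pow hp, canonCoeff_prime_pow hp, sum_range_succ]
  ring

/-- The factor of `G_F` at a prime dividing `q` exactly once is `1 - F'(1) = 1 - F(1)`. -/
lemma canonCoeff_eq_zero_of_factorization_eq_one (hF1 : F 1 = 1) {p q : ℕ}
    (h : q.factorization p = 1) : canonCoeff F q = 0 := by
  have hp : p ∈ q.primeFactors := by
    simp [← Nat.support_factorization, h]
  refine prod_eq_zero hp ?_
  simp [h, eratos_one, hF1]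

end CanonCoeff

lemma UGsum_prime_pow {G : ℕ → ℂ} {p k : ℕ} (hp : p.Prime) (hk : k ≠ 0) :
    UGsum G (p ^ k) = G (p ^ k) - G (p ^ (k + 1)) := by
  obtain ⟨j, rfl⟩ := Nat.exists_eq_add_of_le' (Nat.one_le_iff_ne_zero.2 hk)
  rw [UGsum, Nat.sum_divisors_prime_pow hp, sum_range_succ', sum_range_succ']
  have hmu : ∀ i, mu (p ^ (i + 2)) = 0 := fun i => by simp [mu_prime_pow hp]
  simp only [hmu, zero_mul, sum_const_zero, zero_add, pow_zero, mu_one, one_mul,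
    pow_one, mu_prime hp, ← pow_add, ← pow_succ']
  ring

lemma mul_UGsum_canonCoeff {F : ℕ → ℂ} (hF : IsMult F) (hF1 : F 1 = 1) :
    ∀ d : ℕ, 0 < d → (d : ℂ) * UGsum (canonCoeff F) d = eratos F d := by
  refine IsMult.eq_of_eq_on_prime_pow (isMult_natCast.mul (isMult_UGsum (isMult_canonCoeff F)))
    (isMult_eratos hF) ?_ fun p k hp hk => ?_
  · simp [UGsum, mu_one, eratos_one, hF1, canonCoeff]
  · have hpk : (p : ℂ) ^ k ≠ 0 := pow_ne_zero _ (Nat.cast_ne_zero.2 hp.ne_zero)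
    rw [UGsum_prime_pow hp hk.ne', canonCoeff_prime_pow_succ hp]
    push_cast
    field_simp
    ring

lemma sum_Icc_filter_dvd (f : ℕ → ℂ) {d : ℕ} (hd : 0 < d) (N : ℕ) :
    ∑ q ∈ Icc 1 N with d ∣ q, f q = ∑ K ∈ Icc 1 (N / d), f (d * K) := by
  have himage : {q ∈ Icc 1 N | d ∣ q} = (Icc 1 (N / d)).image (d * ·) := by
    ext q
    simp only [mem_filter, mem_Icc, mem_image, Nat.le_div_iff_mul_le hd]
    constructor
    · rintro ⟨⟨hq1, hqN⟩, K, rfl⟩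
      exact ⟨K, ⟨Nat.pos_of_mul_pos_left hq1, by linarith⟩, rfl⟩
    · rintro ⟨K, ⟨hK1, hKN⟩, rfl⟩
      exact ⟨⟨Nat.mul_pos hd hK1, by linarith⟩, dvd_mul_right d K⟩
  rw [himage, sum_image fun _ _ _ _ h => Nat.eq_of_mul_eq_mul_left hd h]

lemma cR_eq_sum_divisors_filter (q : ℕ) {a : ℕ} (ha : a ≠ 0) :
    cR q a = ∑ d ∈ a.divisors with d ∣ q, (d : ℂ) * mu (q / d) := by
  rw [cR]
  congr 1
  ext d
  simp [Nat.dvd_gcd_iff, ha, Nat.gcd_ne_zero_right ha, and_comm]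

lemma RS_eq_sum_LS (G : ℕ → ℂ) {a : ℕ} (ha : 0 < a) (x : ℝ) :
    RS G a x = ∑ d ∈ a.divisors, (d : ℂ) * LS G d (x / d) := by
  simp only [RS, LS, cR_eq_sum_divisors_filter _ ha.ne', mul_sum, sum_filter, mul_ite, mul_zero]
  rw [sum_comm]
  refine sum_congr rfl fun d hd => ?_
  have hd0 : 0 < d := Nat.pos_of_mem_divisors hd
  have hsplit := sum_Icc_filter_dvd (fun q => G q * (d * mu (q / d))) hd0 ⌊x⌋₊
  simp only [Nat.mul_div_cancel_left _ hd0, sum_filter] at hsplit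
  rw [Nat.floor_div_natCast, hsplit]
  exact sum_congr rfl fun K _ => by ring

lemma gcd_mul_eq_of_dvd_of_coprime {t r m : ℕ} (ht : t ∣ m) (hr : r.Coprime m) :
    Nat.gcd (t * r) m = t := by
  rw [Nat.Coprime.gcd_mul_right_cancel t hr, Nat.gcd_eq_left ht]

lemma coprime_div_gcd_of_squarefree {K : ℕ} (hK : Squarefree K) (m : ℕ) :
    (K / Nat.gcd K m).Coprime m := by
  set t := Nat.gcd K m
  have hK_eq : t * (K / t) = K := Nat.mul_div_cancel' (Nat.gcd_dvd_left K m)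
  have hcop : t.Coprime (K / t) := Nat.coprime_of_squarefree_mul (by rwa [hK_eq])
  have hgK : Nat.gcd (K / t) m ∣ K :=
    (Nat.gcd_dvd_left _ m).trans (Nat.div_dvd_of_dvd (Nat.gcd_dvd_left K m))
  have hgt : Nat.gcd (K / t) m ∣ t := Nat.dvd_gcd hgK (Nat.gcd_dvd_right _ m)
  exact Nat.dvd_one.1 (hcop ▸ Nat.dvd_gcd hgt (Nat.gcd_dvd_left _ m))

/-- Each squarefree `K` splits uniquely as `t * r` with `t = gcd K m ∣ m` and `r` coprime to
`m`. -/
lemma LS_eq_sum_SS {G : ℕ → ℂ} (hG : IsMult G) {d m : ℕ} (hd : 0 < d) (hm : 0 < m)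
    (hdm : ∀ r : ℕ, r.Coprime m → r.Coprime d) (x : ℝ) :
    LS G d x = ∑ t ∈ m.divisors, mu t * G (d * t) * SS G m (x / t) := by
  have hterm : ∀ t r : ℕ, t ∣ m → r.Coprime m → 0 < r →
      mu t * G (d * t) * (G r * mu r) = mu (t * r) * G (d * (t * r)) := by
    intro t r htm hrm hr
    have htr : t.Coprime r := (hrm.coprime_dvd_right htm).symm
    have hdtr : (d * t).Coprime r := Nat.Coprime.mul_left (hdm r hrm).symm htr
    rw [mu_mul htr, ← mul_assoc d, hG _ _ (Nat.mul_pos hd (Nat.pos_of_dvd_of_pos htm hm)) hr hdtr]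
    ring
  simp only [LS, SS, Nat.floor_div_natCast, mul_sum]
  rw [sum_sigma']
  symm
  refine sum_bij_ne_zero (fun p _ _ => p.1 * p.2) ?_ ?_ ?_ ?_
  · rintro ⟨t, r⟩ h -
    simp only [mem_sigma, mem_filter, Nat.mem_divisors, mem_Icc] at h ⊢
    obtain ⟨⟨htm, -⟩, ⟨hr1, hrN⟩, -⟩ := h
    have ht := Nat.pos_of_dvd_of_pos htm hm
    exact ⟨Nat.mul_pos ht hr1, by rw [mul_comm]; exact (Nat.le_div_iff_mul_le ht).1 hrN⟩
  · rintro ⟨t, r⟩ h - ⟨t', r'⟩ h' - heq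
    simp only [mem_sigma, mem_filter, Nat.mem_divisors, mem_Icc] at h h'
    have htt : t = t' := by
      rw [← gcd_mul_eq_of_dvd_of_coprime h.1.1 h.2.2, heq,
        gcd_mul_eq_of_dvd_of_coprime h'.1.1 h'.2.2]
    subst htt
    simp only [Sigma.mk.injEq, heq_eq_eq, true_and]
    exact Nat.eq_of_mul_eq_mul_left (Nat.pos_of_dvd_of_pos h.1.1 hm) heq
  · intro K hK hne
    have hsq : Squarefree K := by
      by_contra h
      exact hne (by rw [mu_eq_zero_of_not_squarefree h, zero_mul])
    obtain ⟨hK1, hKN⟩ := mem_Icc.1 hK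
    have htK : Nat.gcd K m ∣ K := Nat.gcd_dvd_left K m
    have ht : 0 < Nat.gcd K m := Nat.gcd_pos_of_pos_left m hK1
    have hrm := coprime_div_gcd_of_squarefree hsq m
    have hr : 0 < K / Nat.gcd K m := Nat.div_pos (Nat.le_of_dvd hK1 htK) ht
    refine ⟨⟨Nat.gcd K m, K / Nat.gcd K m⟩, ?_, ?_, Nat.mul_div_cancel' htK⟩
    · simp only [mem_sigma, mem_filter, Nat.mem_divisors, mem_Icc]
      exact ⟨⟨Nat.gcd_dvd_right K m, hm.ne'⟩, ⟨hr, Nat.div_le_div_right hKN⟩, hrm⟩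
    · rwa [hterm _ _ (Nat.gcd_dvd_right K m) hrm hr, Nat.mul_div_cancel' htK]
  · rintro ⟨t, r⟩ h -
    simp only [mem_sigma, mem_filter, Nat.mem_divisors, mem_Icc] at h
    exact hterm t r h.1.1 h.2.2 h.2.1.1

lemma tendsto_div_natCast_atTop {t : ℕ} (ht : 0 < t) :
    Tendsto (fun x : ℝ => x / t) atTop atTop :=
  tendsto_id.atTop_div_const (by positivity)

section Limits

variable {G : ℕ → ℂ}

lemma LTendsto_of_STendsto (hG : IsMult G) {d m : ℕ} (hd : 0 < d) (hm : 0 < m)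
    (hdm : ∀ r : ℕ, r.Coprime m → r.Coprime d) (hS : STendsto G m 1) :
    LTendsto G d (∑ t ∈ m.divisors, mu t * G (d * t)) := by
  have hlim : Tendsto (fun x : ℝ => ∑ t ∈ m.divisors, mu t * G (d * t) * SS G m (x / t)) atTop
      (nhds (∑ t ∈ m.divisors, mu t * G (d * t) * 1)) :=
    tendsto_finsetSum _ fun t ht =>
      (hS.comp (tendsto_div_natCast_atTop (Nat.pos_of_mem_divisors ht))).const_mul _
  simp only [mul_one, ← LS_eq_sum_SS hG hd hm hdm] at hlim
  exact hlim

lemma RTendsto_of_STendsto (hG : IsMult G) (hS : ∀ b, 0 < b → STendsto G b 1) {a : ℕ}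
    (ha : 0 < a) : RTendsto G a (∑ d ∈ a.divisors, (d : ℂ) * UGsum G d) := by
  have hlim : Tendsto (fun x : ℝ => ∑ d ∈ a.divisors, (d : ℂ) * LS G d (x / d)) atTop
      (nhds (∑ d ∈ a.divisors, (d : ℂ) * UGsum G d)) := by
    refine tendsto_finsetSum _ fun d hd => ?_
    have hd0 := Nat.pos_of_mem_divisors hd
    have hL := LTendsto_of_STendsto hG hd0 hd0 (fun _ h => h) (hS d hd0)
    simp only [mul_comm d] at hL
    exact (hL.comp (tendsto_div_natCast_atTop hd0)).const_mul _
  simp only [← RS_eq_sum_LS G ha] at hlim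
  exact hlim

lemma LS_one_eq_SS_one (x : ℝ) : LS G 1 x = SS G 1 x := by
  simp [LS, SS, mul_comm]

lemma IsMult.map_one_of_STendsto (hG : IsMult G) (hS : STendsto G 1 1) : G 1 = 1 := by
  refine hG.map_one ?_
  by_contra! hzero
  have hS0 : STendsto G 1 0 := by
    refine tendsto_const_nhds.congr fun x => ?_
    refine (sum_eq_zero fun r hr => ?_).symm
    rw [hzero r (mem_Icc.1 (mem_filter.1 hr).1).1, zero_mul]
  exact one_ne_zero (tendsto_nhds_unique hS hS0)

/-- Expanding the Lucht series at `1` along the prime `p` gives the limit `G 1 - G p`, while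
it is literally the coprime series at `1`, with limit `1 = G 1`. -/
lemma IsMult.apply_prime_eq_zero (hG : IsMult G) (hS : ∀ b, 0 < b → STendsto G b 1)
    {p : ℕ} (hp : p.Prime) : G p = 0 := by
  have hG1 := hG.map_one_of_STendsto (hS 1 one_pos)
  have hL := LTendsto_of_STendsto hG one_pos hp.pos (fun r _ => Nat.coprime_one_right r)
    (hS p hp.pos)
  have hL' : LTendsto G 1 1 := (hS 1 one_pos).congr fun x => (LS_one_eq_SS_one x).symm
  have hsum : ∑ t ∈ p.divisors, mu t * G (1 * t) = G 1 - G p := by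
    rw [hp.divisors, sum_pair hp.one_lt.ne, mu_one, mu_prime hp]
    simp only [one_mul]
    ring
  have := tendsto_nhds_unique hL hL'
  rw [hsum, hG1] at this
  linear_combination -this

end Limits

lemma rad_pos (n : ℕ) : 0 < rad n :=
  prod_pos fun _ hp => (Nat.prime_of_mem_primeFactors hp).pos

lemma dvd_mul_rad_of_factorization {a q : ℕ} (ha : 0 < a) (hq : 0 < q)
    (h : ∀ p, p.Prime → q.factorization p ≠ 1 ∧ q.factorization p ≤ a.factorization p + 1) :
    q ∣ a * rad a := by
  have harad : a * rad a ≠ 0 := (Nat.mul_pos ha (rad_pos a)).ne'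
  refine (Nat.factorization_le_iff_dvd hq.ne' harad).1 fun p => ?_
  by_cases hp : p.Prime
  swap
  · simp [Nat.factorization_eq_zero_of_not_prime _ hp]
  obtain ⟨hne, hle⟩ := h p hp
  by_cases hpa : p ∣ a
  · have hap : a * p ∣ a * rad a :=
      mul_dvd_mul_left a (dvd_prod_of_mem _ (Nat.mem_primeFactors.2 ⟨hp, hpa, ha.ne'⟩))
    have := (Nat.factorization_le_iff_dvd (Nat.mul_pos ha hp.pos).ne' harad).2 hap p
    rw [Nat.factorization_mul ha.ne' hp.ne_zero, Finsupp.add_apply, hp.factorization_self] at this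
    omega
  · rw [Nat.factorization_eq_zero_of_not_dvd hpa] at hle
    omega

lemma cR_eq_zero_of_factorization {q a p : ℕ} (ha : a ≠ 0)
    (h : a.factorization p + 2 ≤ q.factorization p) : cR q a = 0 := by
  refine sum_eq_zero fun d hd => ?_
  have hdq : d ∣ q := (Nat.dvd_of_mem_divisors hd).trans (Nat.gcd_dvd_left q a)
  have hda : d ∣ a := (Nat.dvd_of_mem_divisors hd).trans (Nat.gcd_dvd_right q a)
  have hd0 : d ≠ 0 := ne_zero_of_dvd_ne_zero ha hda
  have hvd : d.factorization p ≤ a.factorization p :=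
    (Nat.factorization_le_iff_dvd hd0 ha).2 hda p
  have hv : 2 ≤ (q / d).factorization p := by
    rw [Nat.factorization_div hdq, Finsupp.tsub_apply]
    omega
  have hsq : ¬ Squarefree (q / d) := fun hsq => by
    have := hsq.natFactorization_le_one p
    omega
  rw [mu_eq_zero_of_not_squarefree hsq, mul_zero]

section CanonicalSeries

variable {F : ℕ → ℂ}

lemma SS_canonCoeff (hF1 : F 1 = 1) (a : ℕ) {x : ℝ} (hx : 1 ≤ x) :
    SS (canonCoeff F) a x = 1 := by
  rw [SS, sum_eq_single_of_mem 1 (by simpa using (Nat.one_le_floor_iff x).2 hx)]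
  · simp [canonCoeff, mu_one]
  · intro r hr hr1
    by_cases hsq : Squarefree r
    · obtain ⟨p, hp, hpr⟩ := Nat.exists_prime_and_dvd hr1
      have hr0 : r ≠ 0 := hsq.ne_zero
      have hfp : r.factorization p = 1 := le_antisymm (hsq.natFactorization_le_one p)
        (hp.factorization_pos_of_dvd hr0 hpr)
      rw [canonCoeff_eq_zero_of_factorization_eq_one hF1 hfp, zero_mul]
    · rw [mu_eq_zero_of_not_squarefree hsq, mul_zero]

lemma STendsto_canonCoeff (hF1 : F 1 = 1) (a : ℕ) : STendsto (canonCoeff F) a 1 :=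
  tendsto_const_nhds.congr' <| (eventually_ge_atTop 1).mono fun _ hx =>
    (SS_canonCoeff hF1 a hx).symm

lemma RTendsto_canonCoeff (hF : IsMult F) (hF1 : F 1 = 1) {a : ℕ} (ha : 0 < a) :
    RTendsto (canonCoeff F) a (F a) := by
  have hlim := RTendsto_of_STendsto (isMult_canonCoeff F)
    (fun b _ => STendsto_canonCoeff hF1 b) ha
  rwa [sum_congr rfl fun d hd => mul_UGsum_canonCoeff hF hF1 d (Nat.pos_of_mem_divisors hd),
    sum_divisors_eq_iff_eratos_eq.2 (fun _ _ => rfl) a ha] at hlim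

/-- A prime dividing `q` to a power beyond `v_p(a) + 1` kills `c_q(a)`, and a prime dividing `q`
but not `a` divides `q` exactly once and so kills `G_F(q)`. -/
lemma canonCoeff_mul_cR_eq_zero (hF1 : F 1 = 1) {a q : ℕ} (ha : 0 < a) (hq : 0 < q)
    (hdvd : ¬ q ∣ a * rad a) : canonCoeff F q * cR q a = 0 := by
  by_contra hne
  refine hdvd (dvd_mul_rad_of_factorization ha hq fun p hp => ⟨fun h1 => hne ?_, ?_⟩)
  · rw [canonCoeff_eq_zero_of_factorization_eq_one hF1 h1, zero_mul]
  · by_contra! hlt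
    exact hne (by rw [cR_eq_zero_of_factorization ha.ne' hlt, mul_zero])

lemma RS_canonCoeff_of_le (hF1 : F 1 = 1) {a : ℕ} (ha : 0 < a) {x : ℝ}
    (hx : ((a * rad a : ℕ) : ℝ) ≤ x) :
    RS (canonCoeff F) a x = ∑ d ∈ (a * rad a).divisors, canonCoeff F d * cR d a := by
  have harad : 0 < a * rad a := Nat.mul_pos ha (rad_pos a)
  refine (sum_subset (fun d hd => ?_) fun q hq hq' => ?_).symm
  · exact mem_Icc.2 ⟨Nat.pos_of_mem_divisors hd,
      (Nat.le_of_dvd harad (Nat.dvd_of_mem_divisors hd)).trans (Nat.le_floor hx)⟩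
  · exact canonCoeff_mul_cR_eq_zero hF1 ha (mem_Icc.1 hq).1
      fun h => hq' (Nat.mem_divisors.2 ⟨h, harad.ne'⟩)

lemma RTendsto_canonCoeff_sum_divisors_mul_rad (hF1 : F 1 = 1) {a : ℕ} (ha : 0 < a) :
    RTendsto (canonCoeff F) a (∑ d ∈ (a * rad a).divisors, canonCoeff F d * cR d a) :=
  tendsto_const_nhds.congr' <| (eventually_ge_atTop _).mono fun _ hx =>
    (RS_canonCoeff_of_le hF1 ha hx).symm

end CanonicalSeries

lemma eq_canonCoeff_of_tendsto {F G : ℕ → ℂ} (hF1 : F 1 = 1) (hG : IsMult G)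
    (hR : ∀ a, 0 < a → RTendsto G a (F a)) (hS : ∀ a, 0 < a → STendsto G a 1) :
    ∀ n, 0 < n → G n = canonCoeff F n := by
  have hG1 := hG.map_one_of_STendsto (hS 1 one_pos)
  have hU : ∀ d, 0 < d → eratos F d = d * UGsum G d := sum_divisors_eq_iff_eratos_eq.1
    fun a ha => tendsto_nhds_unique (RTendsto_of_STendsto hG hS ha) (hR a ha)
  have hstep : ∀ p, p.Prime → ∀ v, G (p ^ (v + 1)) = G (p ^ v) - eratos F (p ^ v) / p ^ v := by
    rintro p hp (_ | v)
    · simp [hG.apply_prime_eq_zero hS hp, hG1, eratos_one, hF1]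
    · have hpv : (p : ℂ) ^ (v + 1) ≠ 0 := pow_ne_zero _ (Nat.cast_ne_zero.2 hp.ne_zero)
      rw [hU _ (pow_pos hp.pos _), UGsum_prime_pow hp (Nat.succ_ne_zero v)]
      push_cast
      field_simp
      ring
  have hpow : ∀ p, p.Prime → ∀ v, G (p ^ v) = canonCoeff F (p ^ v) := by
    intro p hp v
    induction v with
    | zero => simp [hG1, canonCoeff]
    | succ v ih => rw [hstep p hp, ih, canonCoeff_prime_pow_succ hp]
  exact hG.eq_of_eq_on_prime_pow (isMult_canonCoeff F) (by simp [hG1, canonCoeff])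
    fun p k hp _ => hpow p hp k

/-- The canonical Ramanujan coefficient of a non-null multiplicative `F` gives a finite
pure Ramanujan expansion of `F` with coprime series constantly `1`, and it is the unique
such multiplicative coefficient (Theorem 5.1). -/
theorem stmt_8 (F : ℕ → ℂ) (hFmult : IsMult F) (hF : ∃ a : ℕ, 0 < a ∧ F a ≠ 0) :
    IsMult (canonCoeff F) ∧
    (∀ a : ℕ, 0 < a → RTendsto (canonCoeff F) a (F a)) ∧
    (∀ a : ℕ, 0 < a →
      (∑ d ∈ (a * rad a).divisors, canonCoeff F d * cR d a) = F a) ∧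
    (∀ a : ℕ, 0 < a → STendsto (canonCoeff F) a 1) ∧
    (∀ G : ℕ → ℂ, IsMult G → (∀ a : ℕ, 0 < a → RTendsto G a (F a)) →
      (∀ a : ℕ, 0 < a → STendsto G a 1) → ∀ n : ℕ, 0 < n → G n = canonCoeff F n) := by
  have hF1 : F 1 = 1 := hFmult.map_one hF
  have hR a (ha : 0 < a) : RTendsto (canonCoeff F) a (F a) := RTendsto_canonCoeff hFmult hF1 ha
  refine ⟨isMult_canonCoeff F, hR, fun a ha => ?_, fun a _ => STendsto_canonCoeff hF1 a,
    fun G hG hRG hSG => eq_canonCoeff_of_tendsto hF1 hG hRG hSG⟩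
  exact tendsto_nhds_unique (RTendsto_canonCoeff_sum_divisors_mul_rad hF1 ha) (hR a ha)
end

section
/- Let G : ℕ → ℂ be multiplicative such that the coprime series S_G(a) converges for every a ∈ ℕ and S_G(1) ≠ 0. Then: (i) G(p) ≠ 1 for every prime p; (ii) S_G(a) = ( ∏_{p ∣ a} (1 − G(p))^{-1} ) · S_G(1) for every a ∈ ℕ; (iii) G(p) = 1 − S_G(1)/S_G(p) for every prime p; (iv) S_G(a) ≠ 0 for every a ∈ ℕ. -/
open Filter Finset

/-!
For `p ∤ a`, the terms of `S_G(a, x)` with `p ∣ r` are, writing `r = p s`, exactly `-G(p)` times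
`S_G(ap, x/p)`, because `μ(ps) = -μ(s)` for `p ∤ s` and `μ(ps) = 0` otherwise. In the limit this
gives `S_G(a) = (1 - G(p)) S_G(ap)`. As `S_G(a)` depends only on the prime factors of `a`,
induction on them yields the product formula, and `S_G(1) ≠ 0` forces `G(p) ≠ 1`.
-/

lemma Finset.sum_Icc_filter_dvd {M : Type*} [AddCommMonoid M] (f : ℕ → M) {p : ℕ} (hp : 0 < p)
    (n : ℕ) : ∑ r ∈ Icc 1 n with p ∣ r, f r = ∑ s ∈ Icc 1 (n / p), f (p * s) := by
  have hmultiples : {r ∈ Icc 1 n | p ∣ r} = (Icc 1 (n / p)).image (p * ·) := by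
    ext r
    simp only [mem_filter, mem_Icc, mem_image, Nat.le_div_iff_mul_le hp]
    constructor
    · rintro ⟨⟨hr1, hrn⟩, s, rfl⟩
      exact ⟨s, ⟨Nat.pos_of_mul_pos_left hr1, by linarith⟩, rfl⟩
    · rintro ⟨s, ⟨hs1, hsn⟩, rfl⟩
      exact ⟨⟨Nat.mul_pos hp hs1, by linarith⟩, dvd_mul_right p s⟩
  rw [hmultiples, sum_image fun _ _ _ _ h => Nat.eq_of_mul_eq_mul_left hp h]

lemma mu_prime_mul_of_not_dvd {p s : ℕ} (hp : p.Prime) (hps : ¬p ∣ s) : mu (p * s) = -mu s := by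
  have hcop : p.Coprime s := hp.coprime_iff_not_dvd.2 hps
  simp [mu, ArithmeticFunction.isMultiplicative_moebius.map_mul_of_coprime hcop,
    ArithmeticFunction.moebius_apply_prime hp]

lemma mu_prime_mul_of_dvd {p s : ℕ} (hp : p.Prime) (hps : p ∣ s) : mu (p * s) = 0 := by
  have hsq : ¬Squarefree (p * s) := fun h =>
    hp.coprime_iff_not_dvd.1 (Nat.coprime_of_squarefree_mul h) hps
  simp [mu, ArithmeticFunction.moebius_eq_zero_of_not_squarefree hsq]

noncomputable def coprimeTerm (G : ℕ → ℂ) (a r : ℕ) : ℂ :=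
  if r.Coprime a then G r * mu r else 0

lemma SS_eq_sum_coprimeTerm (G : ℕ → ℂ) (a : ℕ) (x : ℝ) :
    SS G a x = ∑ r ∈ Icc 1 ⌊x⌋₊, coprimeTerm G a r := by
  rw [SS, sum_filter]
  rfl

lemma SS_eq_of_primeFactors_eq (G : ℕ → ℂ) {a b : ℕ} (ha : a ≠ 0) (hb : b ≠ 0)
    (hab : a.primeFactors = b.primeFactors) : SS G a = SS G b := by
  funext x
  simp only [SS_eq_sum_coprimeTerm]
  refine sum_congr rfl fun r hr => ?_
  have hr : r ≠ 0 := by grind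
  simp only [coprimeTerm, ← Nat.disjoint_primeFactors hr ha, ← Nat.disjoint_primeFactors hr hb,
    hab]

lemma coprimeTerm_eq_add (G : ℕ → ℂ) {p a : ℕ} (hp : p.Prime) (r : ℕ) :
    coprimeTerm G a r = coprimeTerm G (a * p) r + if p ∣ r then coprimeTerm G a r else 0 := by
  by_cases hpr : p ∣ r
  · have hncop : ¬r.Coprime (a * p) := fun h =>
      hp.coprime_iff_not_dvd.1 (Nat.coprime_mul_iff_right.1 h).2.symm hpr
    simp [coprimeTerm, hpr, hncop]
  · have hrp : r.Coprime p := (hp.coprime_iff_not_dvd.2 hpr).symm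
    simp only [coprimeTerm, hpr, if_false, add_zero, Nat.coprime_mul_iff_right, and_iff_left hrp]

lemma coprimeTerm_prime_mul {G : ℕ → ℂ} (hG : IsMult G) {p a s : ℕ} (hp : p.Prime)
    (hpa : ¬p ∣ a) (hs : 0 < s) : coprimeTerm G a (p * s) = -(G p * coprimeTerm G (a * p) s) := by
  by_cases hps : p ∣ s
  · have hncop : ¬s.Coprime (a * p) := fun h =>
      hp.coprime_iff_not_dvd.1 (Nat.coprime_mul_iff_right.1 h).2.symm hps
    simp [coprimeTerm, mu_prime_mul_of_dvd hp hps, hncop]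
  · have hps' : p.Coprime s := hp.coprime_iff_not_dvd.2 hps
    have hpa' : p.Coprime a := hp.coprime_iff_not_dvd.2 hpa
    have hcop : (p * s).Coprime a ↔ s.Coprime (a * p) := by
      rw [Nat.coprime_mul_iff_left, Nat.coprime_mul_iff_right, and_iff_right hpa',
        and_iff_left hps'.symm]
    simp only [coprimeTerm, hcop, mu_prime_mul_of_not_dvd hp hps, hG p s hp.pos hs hps']
    split_ifs <;> ring

lemma SS_eq_sub {G : ℕ → ℂ} (hG : IsMult G) {p a : ℕ} (hp : p.Prime) (hpa : ¬p ∣ a) (x : ℝ) :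
    SS G a x = SS G (a * p) x - G p * SS G (a * p) (x / p) := by
  simp only [SS_eq_sum_coprimeTerm, Nat.floor_div_natCast]
  rw [sum_congr rfl fun r _ => coprimeTerm_eq_add G hp r, sum_add_distrib, ← sum_filter,
    sum_Icc_filter_dvd _ hp.pos, mul_sum, sub_eq_add_neg, ← sum_neg_distrib]
  congr 1
  refine sum_congr rfl fun s hs => coprimeTerm_prime_mul hG hp hpa ?_
  grind

lemma STendsto.eq_of_primeFactors_eq {G : ℕ → ℂ} {a b : ℕ} {L M : ℂ} (hL : STendsto G a L)
    (hM : STendsto G b M) (ha : a ≠ 0) (hb : b ≠ 0) (hab : a.primeFactors = b.primeFactors) :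
    L = M := by
  rw [STendsto, SS_eq_of_primeFactors_eq G ha hb hab] at hL
  exact tendsto_nhds_unique hL hM

lemma STendsto.eq_one_sub_mul {G : ℕ → ℂ} (hG : IsMult G) {p a : ℕ} (hp : p.Prime)
    (hpa : ¬p ∣ a) {L M : ℂ} (hL : STendsto G a L) (hM : STendsto G (a * p) M) :
    L = (1 - G p) * M := by
  have hdiv : Tendsto (fun x : ℝ => x / p) atTop atTop :=
    tendsto_id.atTop_div_const (by exact_mod_cast hp.pos)
  have hsplit : STendsto G a (M - G p * M) :=
    (hM.sub ((hM.comp hdiv).const_mul _)).congr fun x => (SS_eq_sub hG hp hpa x).symm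
  rw [tendsto_nhds_unique hL hsplit]
  ring

/-- Coprime series with separating multiplicative coefficients (Lemma 5.3). -/
theorem stmt_10 (G : ℕ → ℂ) (hG : IsMult G) (S : ℕ → ℂ)
    (hS : ∀ a : ℕ, 0 < a → STendsto G a (S a)) (hS1 : S 1 ≠ 0) :
    (∀ p : ℕ, p.Prime → G p ≠ 1) ∧
    (∀ a : ℕ, 0 < a → S a = (∏ p ∈ a.primeFactors, (1 - G p)⁻¹) * S 1) ∧
    (∀ p : ℕ, p.Prime → G p = 1 - S 1 / S p) ∧
    (∀ a : ℕ, 0 < a → S a ≠ 0) := by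
  have hrec {p a : ℕ} (hp : p.Prime) (ha : 0 < a) (hpa : ¬p ∣ a) : S a = (1 - G p) * S (a * p) :=
    (hS a ha).eq_one_sub_mul hG hp hpa (hS _ (Nat.mul_pos ha hp.pos))
  have hS1p {p : ℕ} (hp : p.Prime) : S 1 = (1 - G p) * S p := by
    simpa using hrec hp one_pos hp.not_dvd_one
  have hGp {p : ℕ} (hp : p.Prime) : 1 - G p ≠ 0 := fun h => hS1 (by simp [hS1p hp, h])
  have hprod (a : ℕ) : 0 < a → S a = (∏ p ∈ a.primeFactors, (1 - G p)⁻¹) * S 1 := by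
    induction a using induction_on_primes with
    | zero => simp
    | one => simp
    | prime_mul p a hp ih =>
      intro hpa0
      have ha : 0 < a := Nat.pos_of_mul_pos_left hpa0
      have hfac : (p * a).primeFactors = insert p a.primeFactors := by
        rw [Nat.primeFactors_mul hp.ne_zero ha.ne', hp.primeFactors, insert_eq]
      by_cases hdvd : p ∣ a
      · rw [insert_eq_of_mem (Nat.mem_primeFactors.2 ⟨hp, hdvd, ha.ne'⟩)] at hfac
        rw [hfac, ← ih ha]
        exact (hS _ hpa0).eq_of_primeFactors_eq (hS a ha) hpa0.ne' ha.ne' hfac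
      · rw [hfac, prod_insert fun h => hdvd (Nat.dvd_of_mem_primeFactors h), mul_assoc, ← ih ha,
          hrec hp ha hdvd, mul_comm a p, inv_mul_cancel_left₀ (hGp hp)]
  have hne (a : ℕ) (ha : 0 < a) : S a ≠ 0 := by
    rw [hprod a ha]
    exact mul_ne_zero (prod_ne_zero_iff.2 fun p hp =>
      inv_ne_zero (hGp (Nat.prime_of_mem_primeFactors hp))) hS1
  refine ⟨fun p hp h => hGp hp (sub_eq_zero.2 h.symm), hprod, fun p hp => ?_, hne⟩
  rw [hS1p hp, mul_div_cancel_right₀ _ (hne p hp.pos)]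
  ring
end

section
/- Let G : ℕ → ℂ be multiplicative and a ∈ ℕ. Then R_G(a,x) = Σ_{d ∣ a·rad(a)} G(d)·c_d(a)·S_G(a, x/d) for every real x ≥ 0. Consequently, if S_G(a) converges, then R_G(a) converges and R_G(a) = E_G(a)·S_G(a). -/
open Filter Finset

/-!
Write `A = a · rad a` and split each `q` as `q = d · r` with `d = gcd(q, A)`. If `r` is not coprime
to `a`, some prime `p ∣ a` divides `q` to the power `v_p(a) + 2`, and then every term of Kluyver's
formula for `c_q(a)` contains `μ` of a non-squarefree number, so `c_q(a) = 0`. If `r` is coprime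
to `a`, then `d ∣ A` is coprime to `r`, and `G(q) c_q(a) = G(d) c_d(a) · G(r) μ(r)`. Conversely
every pair `d ∣ A`, `r` coprime to `a` arises this way, and `d r ≤ x` iff `r ≤ x / d`. The limit
statement follows termwise, since the sum over `d ∣ A` is finite.
-/

lemma mu_mul_of_coprime {m n : ℕ} (h : Nat.Coprime m n) : mu (m * n) = mu m * mu n := by
  simp only [mu, ArithmeticFunction.isMultiplicative_moebius.map_mul_of_coprime h, Int.cast_mul]

lemma coprime_mul_rad_iff {r a : ℕ} : Nat.Coprime r (a * rad a) ↔ Nat.Coprime r a :=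
  ⟨fun h => (Nat.coprime_mul_iff_right.1 h).1,
    fun h => Nat.Coprime.mul_right h (h.coprime_dvd_right (Nat.prod_primeFactors_dvd a))⟩

lemma mul_rad_ne_zero {a : ℕ} (ha : a ≠ 0) : a * rad a ≠ 0 :=
  mul_ne_zero ha (ne_zero_of_dvd_ne_zero ha (Nat.prod_primeFactors_dvd a))

lemma cR_mul_of_coprime {a d r : ℕ} (hdr : Nat.Coprime d r) (hra : Nat.Coprime r a) :
    cR (d * r) a = cR d a * mu r := by
  rw [cR, cR, Nat.Coprime.gcd_mul_right_cancel d hra, sum_mul]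
  refine sum_congr rfl fun e he => ?_
  have hed : e ∣ d := (Nat.mem_divisors.1 he).1.trans (Nat.gcd_dvd_left d a)
  rw [mul_comm d r, Nat.mul_div_assoc r hed, mul_comm r,
    mu_mul_of_coprime (hdr.coprime_dvd_left (Nat.div_dvd_of_dvd hed)), mul_assoc]

lemma cR_eq_zero_of_pow_dvd {q a p : ℕ} (hq : q ≠ 0) (ha : a ≠ 0) (hp : p.Prime)
    (h : p ^ (a.factorization p + 2) ∣ q) : cR q a = 0 := by
  refine sum_eq_zero fun e he => ?_
  have heq : e ∣ q := (Nat.mem_divisors.1 he).1.trans (Nat.gcd_dvd_left q a)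
  have hea : e ∣ a := (Nat.mem_divisors.1 he).1.trans (Nat.gcd_dvd_right q a)
  have hqe : q / e ≠ 0 := (Nat.div_pos (Nat.le_of_dvd (Nat.pos_of_ne_zero hq) heq)
    (Nat.pos_of_dvd_of_pos hea (Nat.pos_of_ne_zero ha))).ne'
  have hea_fact : e.factorization p ≤ a.factorization p :=
    (Nat.factorization_le_iff_dvd (ne_zero_of_dvd_ne_zero ha hea) ha).2 hea p
  have hq_fact := (hp.pow_dvd_iff_le_factorization hq).1 h
  have hsq : p ^ 2 ∣ q / e := by
    rw [hp.pow_dvd_iff_le_factorization hqe, Nat.factorization_div heq, Finsupp.tsub_apply]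
    omega
  rw [mu_eq_zero_of_not_squarefree fun hs => hp.not_isUnit (hs p (by rwa [← pow_two])), mul_zero]

lemma cR_eq_zero_of_not_coprime_div_gcd {q a : ℕ} (hq : q ≠ 0) (ha : a ≠ 0)
    (h : ¬ Nat.Coprime (q / q.gcd (a * rad a)) (a * rad a)) : cR q a = 0 := by
  set A := a * rad a
  rw [coprime_mul_rad_iff, Nat.Prime.not_coprime_iff_dvd] at h
  obtain ⟨p, hp, hpr, hpa⟩ := h
  have hA : A ≠ 0 := mul_rad_ne_zero ha
  have hgq : q.gcd A ∣ q := Nat.gcd_dvd_left q A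
  -- `p ∣ a` and `p ∣ rad a` give `v_p(A) > v_p(a)`; `p ∣ q / gcd(q, A)` gives `v_p(q) > v_p(A)`.
  have hpA : a.factorization p + 1 ≤ A.factorization p :=
    (hp.pow_dvd_iff_le_factorization hA).1 (pow_succ p _ ▸ mul_dvd_mul (Nat.ordProj_dvd a p)
      (dvd_prod_of_mem _ (Nat.mem_primeFactors.2 ⟨hp, hpa, ha⟩)))
  have hpq : (q.gcd A).factorization p + 1 ≤ q.factorization p := by
    have hdiv := hp.factorization_pos_of_dvd
      (Nat.div_ne_zero_iff_of_dvd hgq |>.2 ⟨hq, Nat.gcd_ne_zero_right hA⟩) hpr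
    rw [Nat.factorization_div hgq, Finsupp.tsub_apply] at hdiv
    omega
  rw [Nat.factorization_gcd hq hA, Finsupp.inf_apply] at hpq
  exact cR_eq_zero_of_pow_dvd hq ha hp
    ((hp.pow_dvd_iff_le_factorization hq).2 (by omega))

lemma sum_Icc_filter_coprime_div_gcd {M : Type*} [AddCommMonoid M] {A : ℕ} (hA : A ≠ 0)
    (N : ℕ) (f : ℕ → M) :
    ∑ q ∈ Icc 1 N with Nat.Coprime (q / q.gcd A) A, f q =
      ∑ d ∈ A.divisors, ∑ r ∈ Icc 1 (N / d) with Nat.Coprime r A, f (d * r) := by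
  rw [← sum_fiberwise_of_maps_to (g := fun q => q.gcd A) (t := A.divisors)
    fun q _ => Nat.mem_divisors.2 ⟨Nat.gcd_dvd_right q A, hA⟩]
  refine sum_congr rfl fun d hd => ?_
  have hdA : d ∣ A := Nat.dvd_of_mem_divisors hd
  have hd_pos : 0 < d := Nat.pos_of_mem_divisors hd
  symm
  refine sum_nbij' (fun r => d * r) (fun q => q / d) ?_ ?_
    (fun r _ => Nat.mul_div_cancel_left r hd_pos) ?_ fun _ _ => rfl
  · intro r hr
    simp only [mem_filter, mem_Icc] at hr ⊢
    obtain ⟨⟨hr1, hrN⟩, hcop⟩ := hr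
    have hgcd : (d * r).gcd A = d :=
      (Nat.Coprime.gcd_mul_right_cancel d hcop).trans (Nat.gcd_eq_left hdA)
    rw [hgcd, Nat.mul_div_cancel_left r hd_pos, mul_comm]
    exact ⟨⟨⟨Nat.mul_pos hr1 hd_pos, (Nat.le_div_iff_mul_le hd_pos).1 hrN⟩, hcop⟩, rfl⟩
  · intro q hq
    simp only [mem_filter, mem_Icc] at hq ⊢
    obtain ⟨⟨⟨hq1, hqN⟩, hcop⟩, rfl⟩ := hq
    exact ⟨⟨Nat.div_pos (Nat.le_of_dvd hq1 (Nat.gcd_dvd_left q A)) hd_pos,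
      Nat.div_le_div_right hqN⟩, hcop⟩
  · intro q hq
    rw [← (mem_filter.1 hq).2]
    exact Nat.mul_div_cancel' (Nat.gcd_dvd_left q A)

theorem RS_eq_sum_divisors_mul_SS {G : ℕ → ℂ} (hG : IsMult G) {a : ℕ} (ha : 0 < a) (x : ℝ) :
    RS G a x = ∑ d ∈ (a * rad a).divisors, G d * cR d a * SS G a (x / d) := by
  unfold RS SS
  have hvanish : ∀ q ∈ Icc 1 ⌊x⌋₊, G q * cR q a ≠ 0 →
      Nat.Coprime (q / q.gcd (a * rad a)) (a * rad a) := fun q hq hne => by_contra fun h => hne <| by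
    rw [cR_eq_zero_of_not_coprime_div_gcd (Nat.one_le_iff_ne_zero.1 (mem_Icc.1 hq).1) ha.ne' h,
      mul_zero]
  rw [← sum_filter_of_ne hvanish, sum_Icc_filter_coprime_div_gcd (mul_rad_ne_zero ha.ne')]
  refine sum_congr rfl fun d hd => ?_
  have hdA : d ∣ a * rad a := Nat.dvd_of_mem_divisors hd
  simp only [Nat.floor_div_natCast, mul_sum, coprime_mul_rad_iff]
  refine sum_congr rfl fun r hr => ?_
  have hra : r.Coprime a := (mem_filter.1 hr).2
  have hdr : d.Coprime r := (coprime_mul_rad_iff.2 hra).coprime_dvd_right hdA |>.symm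
  have hr_pos : 0 < r := (mem_Icc.1 (mem_filter.1 hr).1).1
  rw [hG d r (Nat.pos_of_mem_divisors hd) hr_pos hdr, cR_mul_of_coprime hdr hra]
  ring

/-- The `RS` formula (Corollary 3.3). -/
theorem stmt_13 (G : ℕ → ℂ) (hG : IsMult G) (a : ℕ) (ha : 0 < a) :
    (∀ x : ℝ, 0 ≤ x →
      RS G a x = ∑ d ∈ (a * rad a).divisors, G d * cR d a * SS G a (x / d)) ∧
    (∀ L : ℂ, STendsto G a L → RTendsto G a (EG G a * L)) := by
  refine ⟨fun x _ => RS_eq_sum_divisors_mul_SS hG ha x, fun L hL => ?_⟩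
  unfold _root_.RTendsto EG
  simp only [RS_eq_sum_divisors_mul_SS hG ha, sum_mul]
  refine tendsto_finsetSum _ fun d hd => (hL.comp (tendsto_id.atTop_div_const ?_)).const_mul _
  exact_mod_cast Nat.pos_of_mem_divisors hd
end

section
/- Let G : ℕ → ℂ be multiplicative and let a, b, c ∈ ℕ with a = b·c, gcd(b,c) = 1, and w_{p,G} = ∞ for every prime p ∣ c. Then R_G(a,x) = Σ_{h ∣ c} G(h)·h·R_G(b, x/h) for every real x ≥ 0. Consequently, if R_G(b) converges, then R_G(a) converges and R_G(a) = D_G(c)·R_G(b). -/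
open Filter Finset

/-!
For coprime `b, c` every divisor of `bc` is uniquely `d * h` with `d ∣ b`, `h ∣ c`, which turns
Kluyver's formula into `c_q(bc) = ∑_{h ∣ (q, c)} h c_{q/h}(b)`. Because `G` is completely
multiplicative at every prime of `c`, `G(q) = G(h) G(q/h)` for `h ∣ (q, c)`; writing `q = h q'`
and summing over `q ≤ x` gives the identity for `R_G(bc, x)`, and the limit is taken termwise.
-/

theorem map_pow_of_cmIndex_eq_top {G : ℕ → ℂ} {p : ℕ} (h : cmIndex G p = ⊤) {k : ℕ}
    (hk : 1 ≤ k) : G (p ^ k) = G p ^ k := by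
  by_contra hne
  have : cmIndex G p ≤ (k - 1 : ℕ) :=
    iSup₂_le fun w hw => Nat.cast_le.mpr <| by
      by_contra hlt
      exact hne (hw k hk (by omega))
  simp [h] at this

namespace IsMult

variable {G : ℕ → ℂ}

theorem map_prime_pow_mul (hG : IsMult G) {p m : ℕ} (hp : p.Prime) (hcm : cmIndex G p = ⊤)
    (hm : 0 < m) (hpm : ¬ p ∣ m) (a : ℕ) : G (p ^ a * m) = G p ^ a * G m := by
  rcases Nat.eq_zero_or_pos a with rfl | ha
  · simp
  rw [hG _ _ (pow_pos hp.pos a) hm ((hp.coprime_iff_not_dvd.mpr hpm).pow_left a),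
    map_pow_of_cmIndex_eq_top hcm ha]

theorem map_mul_of_cmIndex_eq_top (hG : IsMult G) {h k : ℕ} (hh : 0 < h) (hk : 0 < k)
    (hcm : ∀ p, p.Prime → p ∣ h → cmIndex G p = ⊤) : G (h * k) = G h * G k := by
  induction h using Nat.recOnPosPrimePosCoprime generalizing k with
  | zero => omega
  | one => simpa using hG 1 k one_pos hk (Nat.coprime_one_left k)
  | prime_pow p n hp hn =>
    have hp_top := hcm p hp (dvd_pow_self p hn.ne')
    obtain ⟨j, m, hpm, rfl⟩ := Nat.exists_eq_pow_mul_and_not_dvd hk.ne' p hp.ne_one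
    have hm : 0 < m := Nat.pos_of_ne_zero (by rintro rfl; simp at hk)
    rw [← mul_assoc, ← pow_add, map_prime_pow_mul hG hp hp_top hm hpm,
      map_prime_pow_mul hG hp hp_top hm hpm, map_pow_of_cmIndex_eq_top hp_top hn, pow_add,
      mul_assoc]
  | coprime a b ha hb hab iha ihb =>
    have ha0 : 0 < a := by omega
    have hb0 : 0 < b := by omega
    rw [mul_assoc, iha ha0 (by positivity) fun p hp hpa => hcm p hp (dvd_mul_of_dvd_left hpa b),
      ihb hb0 hk fun p hp hpb => hcm p hp (dvd_mul_of_dvd_right hpb a), hG a b ha0 hb0 hab,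
      mul_assoc]

end IsMult

theorem sum_divisors_mul_of_coprime {M : Type*} [AddCommMonoid M] {m n : ℕ} (hmn : m.Coprime n)
    (f : ℕ → M) : ∑ d ∈ (m * n).divisors, f d = ∑ i ∈ m.divisors, ∑ j ∈ n.divisors, f (i * j) := by
  rw [hmn.divisors_mul, sum_map]
  exact (sum_attach _ fun x => f (x.1 * x.2)).trans (sum_product _ _ _)

theorem sum_Icc_ite_dvd {M : Type*} [AddCommMonoid M] (f : ℕ → M) {h : ℕ} (hh : 0 < h) (N : ℕ) :
    ∑ q ∈ Icc 1 N, (if h ∣ q then f (q / h) else 0) = ∑ q ∈ Icc 1 (N / h), f q := by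
  have himage : {q ∈ Icc 1 N | h ∣ q} = (Icc 1 (N / h)).image (h * ·) := by
    ext q
    simp only [mem_filter, mem_Icc, mem_image]
    constructor
    · rintro ⟨⟨hq1, hqN⟩, r, rfl⟩
      exact ⟨r, ⟨by nlinarith, (Nat.le_div_iff_mul_le hh).mpr (by linarith)⟩, rfl⟩
    · rintro ⟨r, ⟨hr1, hrN⟩, rfl⟩
      exact ⟨⟨by nlinarith, by nlinarith [Nat.div_mul_le_self N h]⟩, dvd_mul_right h r⟩
  rw [← sum_filter, himage, sum_image fun x _ y _ hxy => Nat.eq_of_mul_eq_mul_left hh hxy]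
  simp [Nat.mul_div_cancel_left _ hh]

theorem cR_eq_sum_divisors (q : ℕ) {a : ℕ} (ha : a ≠ 0) :
    cR q a = ∑ d ∈ a.divisors, if d ∣ q then (d : ℂ) * mu (q / d) else 0 := by
  rw [cR, ← sum_filter]
  congr 1
  ext d
  simp [Nat.dvd_gcd_iff, ha, and_comm]

theorem cR_mul_of_coprime_s14 (q : ℕ) {b c : ℕ} (hb : b ≠ 0) (hc : c ≠ 0) (hbc : b.Coprime c) :
    cR q (b * c) = ∑ h ∈ c.divisors, if h ∣ q then (h : ℂ) * cR (q / h) b else 0 := by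
  rw [cR_eq_sum_divisors q (mul_ne_zero hb hc), sum_divisors_mul_of_coprime hbc, sum_comm]
  refine sum_congr rfl fun h _ => ?_
  split_ifs with hhq
  · rw [cR_eq_sum_divisors _ hb, mul_sum]
    refine sum_congr rfl fun d _ => ?_
    simp only [mul_comm d h, Nat.dvd_div_iff_mul_dvd hhq, Nat.div_div_eq_div_mul, mul_ite, mul_zero,
      Nat.cast_mul, mul_assoc]
  · exact sum_eq_zero fun d _ => if_neg fun hdq => hhq (dvd_of_mul_left_dvd hdq)

section RamanujanSeries

variable {G : ℕ → ℂ} {b c : ℕ}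

theorem mul_cR_mul_of_coprime (hG : IsMult G) (hb : b ≠ 0) (hc : c ≠ 0) (hbc : b.Coprime c)
    (hcm : ∀ p, p.Prime → p ∣ c → cmIndex G p = ⊤) {q : ℕ} (hq : 0 < q) :
    G q * cR q (b * c) =
      ∑ h ∈ c.divisors, if h ∣ q then G h * h * (G (q / h) * cR (q / h) b) else 0 := by
  rw [cR_mul_of_coprime_s14 q hb hc hbc, mul_sum]
  refine sum_congr rfl fun h hh => ?_
  split_ifs with hhq
  · have hhc := Nat.dvd_of_mem_divisors hh
    have hsplit : G q = G h * G (q / h) := by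
      conv_lhs => rw [← Nat.mul_div_cancel' hhq]
      exact hG.map_mul_of_cmIndex_eq_top (Nat.pos_of_dvd_of_pos hhq hq)
        (Nat.div_pos (Nat.le_of_dvd hq hhq) (Nat.pos_of_dvd_of_pos hhq hq))
        fun p hp hph => hcm p hp (hph.trans hhc)
    rw [hsplit]
    ring
  · rw [mul_zero]

theorem RS_mul_of_coprime (hG : IsMult G) (hb : b ≠ 0) (hc : c ≠ 0) (hbc : b.Coprime c)
    (hcm : ∀ p, p.Prime → p ∣ c → cmIndex G p = ⊤) (x : ℝ) :
    RS G (b * c) x = ∑ h ∈ c.divisors, G h * h * RS G b (x / h) := by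
  rw [RS, sum_congr rfl fun q hq => mul_cR_mul_of_coprime hG hb hc hbc hcm
    (mem_Icc.mp hq).1, sum_comm]
  refine sum_congr rfl fun h hh => ?_
  rw [RS, Nat.floor_div_natCast, mul_sum,
    ← sum_Icc_ite_dvd (fun q => G h * h * (G q * cR q b)) (Nat.pos_of_mem_divisors hh)]

end RamanujanSeries

/-- The `R_G`-recursive formula (Corollary 3.4). -/
theorem stmt_14 (G : ℕ → ℂ) (hG : IsMult G) (a b c : ℕ) (hb : 0 < b) (hc : 0 < c)
    (habc : a = b * c) (hbc : Nat.Coprime b c)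
    (hhyper : ∀ p : ℕ, p.Prime → p ∣ c → cmIndex G p = ⊤) :
    (∀ x : ℝ, 0 ≤ x → RS G a x = ∑ h ∈ c.divisors, G h * (h : ℂ) * RS G b (x / h)) ∧
    (∀ L : ℂ, RTendsto G b L → RTendsto G a (DGsum G c * L)) := by
  subst habc
  have hRS := RS_mul_of_coprime hG hb.ne' hc.ne' hbc hhyper
  refine ⟨fun x _ => hRS x, fun L hL => ?_⟩
  rw [_root_.RTendsto, funext hRS, DGsum, sum_mul]
  refine tendsto_finsetSum _ fun h hh => ?_
  have hh0 : (0 : ℝ) < h := Nat.cast_pos.mpr (Nat.pos_of_mem_divisors hh)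
  exact (hL.comp (tendsto_id.atTop_div_const hh0)).const_mul _
end

section
/- Let G : ℕ → ℂ be multiplicative, let a, b, c ∈ ℕ, and let p be a prime not dividing a·b·c. Let w ∈ ℕ be such that Δ := G(p^w)·G(p) − G(p^{w+1}) ≠ 0. Then for every real x ≥ 0: F_G(a, p·b, c)(x) = ( G(p)·F_G(a, b, p^w·c)(x) − G(p^{w+1})·F_G(a, b, c)(x) ) / Δ. Consequently, if both F_G(a,b,c) and F_G(a,b,p^w·c) converge, then F_G(a, p·b, c) converges. -/
open Filter Finset

/-- The `RSL` series `F_G(a,b,c)(x) = ∑_{q ≤ x, (q,b)=1} G(cq) c_q(a)`. -/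
noncomputable def FS (G : ℕ → ℂ) (a b c : ℕ) (x : ℝ) : ℂ :=
  ∑ q ∈ (Finset.Icc 1 ⌊x⌋₊).filter fun q => Nat.gcd q b = 1, G (c * q) * cR q a

/-! Split the sum over `q` coprime to `b` by the power of `p` in `q`. If `p ∤ q`, multiplicativity
gives `G(p^w c q) = G(p^w) G(cq)`, so the term of `G(p) F_G(a,b,p^w c) - G(p^{w+1}) F_G(a,b,c)` is
`Δ` times that of `F_G(a,pb,c)`. If `q = pm` with `p ∤ m`, then `G(p^w c q) = G(p^{w+1}) G(cm)` and
`G(cq) = G(p) G(cm)`, so the term cancels. If `p² ∣ q`, then `c_q(a) = 0` because `p ∤ a`. -/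

lemma mu_eq_zero_of_sq_dvd {p n : ℕ} (hp : p.Prime) (hn : p ^ 2 ∣ n) : mu n = 0 := by
  have hnsq : ¬ Squarefree n := fun hsq => hp.not_isUnit (hsq p (by rwa [← sq]))
  simp [mu, ArithmeticFunction.moebius_eq_zero_of_not_squarefree hnsq]

lemma cR_eq_zero_of_sq_dvd {p q a : ℕ} (hp : p.Prime) (hpa : ¬ p ∣ a) (hq : p ^ 2 ∣ q) :
    cR q a = 0 := by
  refine Finset.sum_eq_zero fun d hd => ?_
  have hdgcd := (Nat.mem_divisors.mp hd).1
  have hda : d ∣ a := hdgcd.trans (Nat.gcd_dvd_right _ _)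
  obtain ⟨k, rfl⟩ : d ∣ q := hdgcd.trans (Nat.gcd_dvd_left _ _)
  have hd0 : 0 < d := Nat.pos_of_dvd_of_pos hda (Nat.pos_of_ne_zero fun h => hpa (h ▸ dvd_zero p))
  have hpd : Nat.Coprime (p ^ 2) d :=
    Nat.Coprime.pow_left 2 (hp.coprime_iff_not_dvd.mpr fun h => hpa (h.trans hda))
  rw [Nat.mul_div_cancel_left _ hd0, mu_eq_zero_of_sq_dvd hp (hpd.dvd_of_dvd_mul_left hq),
    mul_zero]

lemma coprime_prime_mul_iff {p q b : ℕ} (hp : p.Prime) :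
    Nat.Coprime q (p * b) ↔ Nat.Coprime q b ∧ ¬ p ∣ q := by
  rw [Nat.coprime_mul_iff_right, Nat.coprime_comm, hp.coprime_iff_not_dvd, and_comm]

lemma IsMult.apply_prime_pow_mul {G : ℕ → ℂ} (hG : IsMult G) {p n : ℕ} (hp : p.Prime)
    (hn : 0 < n) (hpn : ¬ p ∣ n) (k : ℕ) : G (p ^ k * n) = G (p ^ k) * G n :=
  hG _ _ (pow_pos hp.pos k) hn (Nat.Coprime.pow_left k (hp.coprime_iff_not_dvd.mpr hpn))

lemma term_mul_sub_eq {G : ℕ → ℂ} (hG : IsMult G) {a c p q : ℕ} (w : ℕ) (hp : p.Prime)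
    (hpa : ¬ p ∣ a) (hpc : ¬ p ∣ c) (hq : 0 < q) :
    (if ¬ p ∣ q then G (c * q) * cR q a else 0) * (G (p ^ w) * G p - G (p ^ (w + 1))) =
      G p * (G (p ^ w * c * q) * cR q a) - G (p ^ (w + 1)) * (G (c * q) * cR q a) := by
  have hc : 0 < c := Nat.pos_of_ne_zero fun h => hpc (h ▸ dvd_zero p)
  by_cases hpq : p ∣ q
  · obtain ⟨m, rfl⟩ := hpq
    by_cases hpm : p ∣ m
    · rw [cR_eq_zero_of_sq_dvd hp hpa (by rw [sq]; exact Nat.mul_dvd_mul_left p hpm)]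
      simp
    · have hcm : ¬ p ∣ c * m := fun h => (hp.dvd_mul.mp h).elim hpc hpm
      have hcm0 : 0 < c * m := Nat.pos_of_ne_zero fun h => hcm (h ▸ dvd_zero p)
      have hG_cpm : G (c * (p * m)) = G p * G (c * m) := by
        rw [mul_left_comm, ← pow_one p, hG.apply_prime_pow_mul hp hcm0 hcm]
      have hG_pwcpm : G (p ^ w * c * (p * m)) = G (p ^ (w + 1)) * G (c * m) := by
        rw [show p ^ w * c * (p * m) = p ^ (w + 1) * (c * m) by ring,
          hG.apply_prime_pow_mul hp hcm0 hcm]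
      rw [if_neg (not_not_intro (dvd_mul_right p m)), hG_cpm, hG_pwcpm]
      ring
  · have hcq : ¬ p ∣ c * q := fun h => (hp.dvd_mul.mp h).elim hpc hpq
    rw [if_pos hpq, mul_assoc (p ^ w), hG.apply_prime_pow_mul hp (Nat.mul_pos hc hq) hcq]
    ring

lemma FS_prime_mul_mul_sub {G : ℕ → ℂ} (hG : IsMult G) {a b c p : ℕ} (w : ℕ) (hp : p.Prime)
    (hpa : ¬ p ∣ a) (hpc : ¬ p ∣ c) (x : ℝ) :
    FS G a (p * b) c x * (G (p ^ w) * G p - G (p ^ (w + 1))) =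
      G p * FS G a b (p ^ w * c) x - G (p ^ (w + 1)) * FS G a b c x := by
  have hfilter : (Finset.Icc 1 ⌊x⌋₊).filter (fun q => Nat.gcd q (p * b) = 1) =
      ((Finset.Icc 1 ⌊x⌋₊).filter fun q => Nat.gcd q b = 1).filter fun q => ¬ p ∣ q := by
    rw [Finset.filter_filter]
    exact Finset.filter_congr fun q _ => coprime_prime_mul_iff hp
  rw [FS, FS, FS, hfilter, Finset.sum_filter, Finset.sum_mul, Finset.mul_sum,
    Finset.mul_sum, ← Finset.sum_sub_distrib]
  exact Finset.sum_congr rfl fun q hq =>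
    term_mul_sub_eq hG w hp hpa hpc (Finset.mem_Icc.mp (Finset.mem_filter.mp hq).1).1

theorem stmt_17_general (G : ℕ → ℂ) (hG : IsMult G) (a b c p w : ℕ)
    (hp : p.Prime) (hpabc : ¬ p ∣ a * b * c)
    (hΔ : G (p ^ w) * G p - G (p ^ (w + 1)) ≠ 0) :
    (∀ x : ℝ, 0 ≤ x →
      FS G a (p * b) c x =
        (G p * FS G a b (p ^ w * c) x - G (p ^ (w + 1)) * FS G a b c x) /
          (G (p ^ w) * G p - G (p ^ (w + 1)))) ∧
    ((∃ L, Tendsto (fun x : ℝ => FS G a b c x) atTop (nhds L)) →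
      (∃ L, Tendsto (fun x : ℝ => FS G a b (p ^ w * c) x) atTop (nhds L)) →
      ∃ L, Tendsto (fun x : ℝ => FS G a (p * b) c x) atTop (nhds L)) := by
  have hpa : ¬ p ∣ a := fun h => hpabc (dvd_mul_of_dvd_left (dvd_mul_of_dvd_left h b) c)
  have hpc : ¬ p ∣ c := fun h => hpabc (dvd_mul_of_dvd_right h (a * b))
  have hformula : ∀ x : ℝ, FS G a (p * b) c x =
      (G p * FS G a b (p ^ w * c) x - G (p ^ (w + 1)) * FS G a b c x) /
        (G (p ^ w) * G p - G (p ^ (w + 1))) := fun x => by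
    rw [eq_div_iff hΔ, FS_prime_mul_mul_sub hG w hp hpa hpc x]
  refine ⟨fun x _ => hformula x, ?_⟩
  rintro ⟨L₁, h₁⟩ ⟨L₂, h₂⟩
  rw [funext hformula]
  exact ⟨_, ((h₂.const_mul _).sub (h₁.const_mul _)).div_const _⟩

/-- The `F_G`-transformation formula (Theorem 7.1). -/
theorem stmt_17 (G : ℕ → ℂ) (hG : IsMult G) (a b c p w : ℕ)
    (ha : 0 < a) (hb : 0 < b) (hc : 0 < c)
    (hp : p.Prime) (hpabc : ¬ p ∣ a * b * c) (hw : 1 ≤ w)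
    (hΔ : G (p ^ w) * G p - G (p ^ (w + 1)) ≠ 0) :
    (∀ x : ℝ, 0 ≤ x →
      FS G a (p * b) c x =
        (G p * FS G a b (p ^ w * c) x - G (p ^ (w + 1)) * FS G a b c x) /
          (G (p ^ w) * G p - G (p ^ (w + 1)))) ∧
    ((∃ L, Tendsto (fun x : ℝ => FS G a b c x) atTop (nhds L)) →
      (∃ L, Tendsto (fun x : ℝ => FS G a b (p ^ w * c) x) atTop (nhds L)) →
      ∃ L, Tendsto (fun x : ℝ => FS G a (p * b) c x) atTop (nhds L)) :=
  stmt_17_general G hG a b c p w hp hpabc hΔ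
end

section
/- Let α ∈ ℂ with α ≠ −1, let ρ ∈ ℝ with ρ > 1, and let ℓ ∈ ℂ. Let H : ℝ_{≥0} → ℂ satisfy H(x) = H(⌊x⌋) for all x ≥ 0, and suppose that H(x) + α·H(x/ρ) tends to ℓ as x → ∞. If either |α| < 1, or both |α| > ρ and H(x) = O(x) as x → ∞, then H(x) tends to ℓ/(1+α) as x → ∞. -/
/-!
With `L = l / (1 + α)`, the function `G = H - L` satisfies `G x + α G (x / ρ) → 0`.
If `‖α‖ < 1`, this writes `‖G x‖` as a vanishing error plus `‖α‖ ‖G (x / ρ)‖`: `G` is bounded on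
bounded sets because it is constant on `[n, n + 1)`, the contraction propagates the bound to all of
`[0, ∞)`, and iterating it squeezes `‖G‖` below any `ε / (1 - ‖α‖)` eventually.
If `‖α‖ > ρ`, run the relation forwards instead: `‖α‖ ‖G y‖ ≤ error + ‖G (ρ y)‖`, and after `n` steps
the linear bound contributes `(C y + D) (ρ / ‖α‖) ^ n → 0`.
-/

open Filter Finset

open Set
open scoped Topology

section RealRecursion

variable {u e : ℝ → ℝ} {a ρ : ℝ}

theorem bddAbove_image_Ici_of_le_add_mul_comp_div {B : ℝ} (ha0 : 0 ≤ a) (ha : a < 1)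
    (hρ : 1 < ρ) (hloc : ∀ X, BddAbove (u '' Icc 0 X)) (he : ∀ᶠ x in atTop, e x ≤ B)
    (hrec : ∀ x, u x ≤ e x + a * u (x / ρ)) : BddAbove (u '' Ici 0) := by
  obtain ⟨X₀, hX₀⟩ := eventually_atTop.1 he
  set X := max X₀ 1
  obtain ⟨M₀, hM₀⟩ := hloc X
  set M := max M₀ (B / (1 - a))
  have hBM : B + a * M ≤ M := by
    have : B ≤ (1 - a) * M := by
      rw [← div_le_iff₀' (by linarith)]
      exact le_max_right _ _
    linarith
  have hstep : ∀ n : ℕ, ∀ x ∈ Icc 0 (X * ρ ^ n), u x ≤ M := by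
    intro n
    induction n with
    | zero =>
      rintro x hx
      rw [pow_zero, mul_one] at hx
      exact (hM₀ ⟨x, hx, rfl⟩).trans (le_max_left _ _)
    | succ n ih =>
      rintro x ⟨hx0, hxn⟩
      rcases le_or_gt x X with hxX | hXx
      · exact (hM₀ ⟨x, ⟨hx0, hxX⟩, rfl⟩).trans (le_max_left _ _)
      have hρ0 : 0 < ρ := by linarith
      have hxρ : x / ρ ∈ Icc 0 (X * ρ ^ n) :=
        ⟨by positivity, by rw [div_le_iff₀ hρ0]; simpa [pow_succ, mul_assoc] using hxn⟩
      calc u x ≤ e x + a * u (x / ρ) := hrec x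
        _ ≤ B + a * M := add_le_add (hX₀ x ((le_max_left _ _).trans hXx.le))
              (mul_le_mul_of_nonneg_left (ih _ hxρ) ha0)
        _ ≤ M := hBM
  refine ⟨M, ?_⟩
  rintro _ ⟨x, hx, rfl⟩
  obtain ⟨n, hn⟩ := pow_unbounded_of_one_lt x hρ
  refine hstep n x ⟨hx, hn.le.trans ?_⟩
  exact le_mul_of_one_le_left (by positivity) (le_max_right _ _)

/-- `c + a ^ n * (M - c)` is the `n`-th iterate of `b ↦ (1 - a) * c + a * b` started at `M`;
its fixed point is `c`. -/
theorem eventually_le_of_le_add_mul_comp_div {M c : ℝ} (ha0 : 0 ≤ a) (hρ : 1 < ρ)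
    (hM : ∀ᶠ x in atTop, u x ≤ M) (he : ∀ᶠ x in atTop, e x ≤ (1 - a) * c)
    (hrec : ∀ x, u x ≤ e x + a * u (x / ρ)) (n : ℕ) :
    ∀ᶠ x in atTop, u x ≤ c + a ^ n * (M - c) := by
  induction n with
  | zero => simpa using hM
  | succ n ih =>
    have ih' := (tendsto_id.atTop_div_const (by linarith : (0 : ℝ) < ρ)).eventually ih
    filter_upwards [ih', he] with x hxρ hex
    calc u x ≤ e x + a * u (x / ρ) := hrec x
      _ ≤ (1 - a) * c + a * (c + a ^ n * (M - c)) :=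
          add_le_add hex (mul_le_mul_of_nonneg_left hxρ ha0)
      _ = c + a ^ (n + 1) * (M - c) := by ring

theorem tendsto_zero_of_le_add_mul_comp_div {M : ℝ} (ha0 : 0 ≤ a) (ha : a < 1) (hρ : 1 < ρ)
    (hu : ∀ x, 0 ≤ u x) (hM : ∀ᶠ x in atTop, u x ≤ M) (he : Tendsto e atTop (𝓝 0))
    (hrec : ∀ x, u x ≤ e x + a * u (x / ρ)) : Tendsto u atTop (𝓝 0) := by
  refine tendsto_order.2 ⟨fun δ hδ => Eventually.of_forall fun x => hδ.trans_le (hu x),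
    fun δ hδ => ?_⟩
  have hε : ∀ᶠ x in atTop, e x ≤ (1 - a) * (δ / 2) :=
    he.eventually (ge_mem_nhds (mul_pos (by linarith) (by linarith)))
  have hiter : Tendsto (fun n : ℕ => δ / 2 + a ^ n * (M - δ / 2)) atTop (𝓝 (δ / 2)) := by
    simpa using ((tendsto_pow_atTop_nhds_zero_of_lt_one ha0 ha).mul_const
      (M - δ / 2)).const_add (δ / 2)
  obtain ⟨n, hn⟩ := (hiter.eventually (gt_mem_nhds (by linarith : δ / 2 < δ))).exists
  filter_upwards [eventually_le_of_le_add_mul_comp_div ha0 hρ hM hε hrec n] with x hx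
  exact hx.trans_lt hn

theorem tendsto_zero_of_mul_le_add_comp_mul {C D : ℝ} (hρ : 1 < ρ) (ha : ρ < a)
    (hu : ∀ x, 0 ≤ u x) (hlin : ∀ x, 0 ≤ x → u x ≤ C * x + D) (he : Tendsto e atTop (𝓝 0))
    (hrec : ∀ y, a * u y ≤ e (ρ * y) + u (ρ * y)) : Tendsto u atTop (𝓝 0) := by
  refine tendsto_order.2 ⟨fun δ hδ => Eventually.of_forall fun x => hδ.trans_le (hu x),
    fun δ hδ => ?_⟩
  have ha0 : 0 < a := by linarith
  have hD : 0 ≤ D := by simpa using (hu 0).trans (hlin 0 le_rfl)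
  obtain ⟨X, hX⟩ := eventually_atTop.1 <|
    he.eventually (ge_mem_nhds (mul_pos (by linarith : 0 < a - 1) (half_pos hδ)))
  have hiter : ∀ n : ℕ, ∀ y, max X 0 ≤ y → u y ≤ δ / 2 + (C * y + D) * (ρ / a) ^ n := by
    intro n
    induction n with
    | zero =>
      intro y hy
      linarith [hlin y ((le_max_right _ _).trans hy)]
    | succ n ih =>
      intro y hy
      have hy0 : 0 ≤ y := (le_max_right _ _).trans hy
      have hρy : y ≤ ρ * y := le_mul_of_one_le_left hy0 hρ.le
      have hDr : D * (ρ / a) ^ n ≤ ρ * (D * (ρ / a) ^ n) :=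
        le_mul_of_one_le_left (by positivity) hρ.le
      refine le_of_mul_le_mul_left ?_ ha0
      calc a * u y ≤ e (ρ * y) + u (ρ * y) := hrec y
        _ ≤ (a - 1) * (δ / 2) + (δ / 2 + (C * (ρ * y) + D) * (ρ / a) ^ n) :=
            add_le_add (hX _ ((le_max_left _ _).trans (hy.trans hρy))) (ih _ (hy.trans hρy))
        _ ≤ a * (δ / 2) + ρ * ((C * y + D) * (ρ / a) ^ n) := by nlinarith
        _ = a * (δ / 2 + (C * y + D) * (ρ / a) ^ (n + 1)) := by
            rw [pow_succ]
            field_simp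
  filter_upwards [eventually_ge_atTop (max X 0)] with y hy
  have hlim : Tendsto (fun n : ℕ => δ / 2 + (C * y + D) * (ρ / a) ^ n) atTop (𝓝 (δ / 2)) := by
    simpa using ((tendsto_pow_atTop_nhds_zero_of_lt_one (by positivity)
      ((div_lt_one ha0).2 ha)).const_mul (C * y + D)).const_add (δ / 2)
  linarith [ge_of_tendsto' hlim fun n => hiter n y hy]

end RealRecursion

section NormedRecursion

variable {𝕜 E : Type*} [NormedField 𝕜] [NormedAddCommGroup E] [NormedSpace 𝕜 E]
  {G : ℝ → E} {α : 𝕜} {ρ : ℝ}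

theorem tendsto_zero_of_tendsto_add_smul_comp_div_of_norm_lt_one (hα : ‖α‖ < 1) (hρ : 1 < ρ)
    (hloc : ∀ X, BddAbove ((‖G ·‖) '' Icc 0 X))
    (hG : Tendsto (fun x => G x + α • G (x / ρ)) atTop (𝓝 0)) : Tendsto G atTop (𝓝 0) := by
  have he : Tendsto (fun x => ‖G x + α • G (x / ρ)‖) atTop (𝓝 0) := by
    simpa using hG.norm
  have hrec : ∀ x, ‖G x‖ ≤ ‖G x + α • G (x / ρ)‖ + ‖α‖ * ‖G (x / ρ)‖ := fun x => by
    simpa [norm_smul] using norm_sub_le (G x + α • G (x / ρ)) (α • G (x / ρ))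
  obtain ⟨M, hM⟩ := bddAbove_image_Ici_of_le_add_mul_comp_div (norm_nonneg α) hα hρ hloc
    (he.eventually (ge_mem_nhds one_pos)) hrec
  refine tendsto_zero_iff_norm_tendsto_zero.2 <|
    tendsto_zero_of_le_add_mul_comp_div (M := M) (norm_nonneg α) hα hρ (fun _ => norm_nonneg _) ?_
      he hrec
  filter_upwards [eventually_ge_atTop 0] with x hx using hM ⟨x, hx, rfl⟩

theorem tendsto_zero_of_tendsto_add_smul_comp_div_of_lt_norm {C D : ℝ} (hα : ρ < ‖α‖)
    (hρ : 1 < ρ) (hlin : ∀ x, 0 ≤ x → ‖G x‖ ≤ C * x + D)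
    (hG : Tendsto (fun x => G x + α • G (x / ρ)) atTop (𝓝 0)) : Tendsto G atTop (𝓝 0) := by
  have hrec : ∀ y, ‖α‖ * ‖G y‖ ≤ ‖G (ρ * y) + α • G (ρ * y / ρ)‖ + ‖G (ρ * y)‖ := fun y => by
    have hy : ρ * y / ρ = y := by field_simp [(by linarith : ρ ≠ 0)]
    simpa [hy, norm_smul] using norm_sub_le (G (ρ * y) + α • G (ρ * y / ρ)) (G (ρ * y))
  exact tendsto_zero_iff_norm_tendsto_zero.2 <| tendsto_zero_of_mul_le_add_comp_mul hρ hα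
    (fun _ => norm_nonneg _) hlin (by simpa using hG.norm) hrec

end NormedRecursion

theorem bddAbove_norm_image_Icc_of_eq_floor {E : Type*} [SeminormedAddGroup E] {G : ℝ → E}
    (hfloor : ∀ x : ℝ, 0 ≤ x → G x = G (⌊x⌋₊ : ℝ)) (X : ℝ) :
    BddAbove ((‖G ·‖) '' Icc 0 X) := by
  refine (((Set.finite_Iic ⌊X⌋₊).image fun n : ℕ => ‖G n‖).bddAbove).mono ?_
  rintro _ ⟨x, ⟨hx0, hxX⟩, rfl⟩
  exact ⟨⌊x⌋₊, Nat.floor_le_floor hxX, by simp only [← hfloor x hx0]⟩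

/-- **Converse convergence theorem** (Theorem 6.1). -/
theorem stmt_18 (α : ℂ) (hα : α ≠ -1) (ρ : ℝ) (hρ : 1 < ρ) (l : ℂ) (H : ℝ → ℂ)
    (hfloor : ∀ x : ℝ, 0 ≤ x → H x = H (⌊x⌋₊ : ℝ))
    (hlim : Tendsto (fun x : ℝ => H x + α * H (x / ρ)) atTop (nhds l))
    (hcase : ‖α‖ < 1 ∨
      (ρ < ‖α‖ ∧
        ∃ C D : ℝ, 0 < C ∧ 0 < D ∧ ∀ x : ℝ, 0 ≤ x → ‖H x‖ ≤ C * x + D)) :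
    Tendsto H atTop (nhds (l / (1 + α))) := by
  set L := l / (1 + α) with hL_def
  have hL : L + α * L = l := by
    rw [hL_def]
    field_simp [show 1 + α ≠ 0 from fun h => hα (by linear_combination h)]
  have hG : Tendsto (fun x => (H x - L) + α • (H (x / ρ) - L)) atTop (𝓝 0) := by
    refine tendsto_sub_nhds_zero_iff.2 hlim |>.congr fun x => ?_
    rw [smul_eq_mul, ← hL]
    ring
  refine tendsto_sub_nhds_zero_iff.1 ?_
  rcases hcase with hα1 | ⟨hαρ, C, D, -, -, hlin⟩
  · refine tendsto_zero_of_tendsto_add_smul_comp_div_of_norm_lt_one hα1 hρ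
      (bddAbove_norm_image_Icc_of_eq_floor fun x hx => ?_) hG
    rw [hfloor x hx]
  · refine tendsto_zero_of_tendsto_add_smul_comp_div_of_lt_norm hαρ hρ (C := C) (D := D + ‖L‖)
      (fun x hx => ?_) hG
    linarith [norm_sub_le (H x) L, hlin x hx]
end
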